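/- arXiv:2409.01130 — 2 statements merged into one kernel-verified Lean document; each statement's English description precedes it below -/
import Mathlib

section
/- Let t, d be positive integers with d ≤ t, let v₁,…,v_t ∈ ℂ^d be vectors such that every d of them are linearly independent (general position), and let u ∈ ℂ^d. Then there exists a d-element subset T ⊆ {1,…,t} such that ⟨u, (∑_{i∈T} |vᵢ⟩⟨vᵢ|)⁻¹ u⟩ ≤ (t−d+1)·⟨u, (∑_{i=1}^t |vᵢ⟩⟨vᵢ|)⁻¹ u⟩. -/
open Matrix Finset
open scoped ComplexOrder

/-!
Write `M_S = ∑_{i ∈ S} vᵢ vᵢ*` and `q_S = ⟨u, M_S⁻¹ u⟩`. Cauchy–Binet gives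
`det M_S = ∑_{T ⊆ S, |T| = d} det M_T`; applied to the family with `u` adjoined and combined with
the matrix determinant lemma it gives `det M_S · q_S = ∑_{R ⊆ S, |R| = d - 1} det (M_R + u u*)`.
Every `R` of size `d - 1` lies in exactly `t - d + 1` sets `T` of size `d`, hence
`∑_T det M_T · q_T = (t - d + 1) · det M · q`: the number `(t - d + 1) q` is an average of the
`q_T` with the positive weights `det M_T`, so some `q_T` is at most it.
-/

namespace Finset

variable {α β : Type*} [DecidableEq α] [AddCommMonoid β]

theorem sum_powersetCard_succ_insert {x : α} {s : Finset α} (hx : x ∉ s) (k : ℕ)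
    (F : Finset α → β) :
    ∑ T ∈ (insert x s).powersetCard (k + 1), F T =
      ∑ T ∈ s.powersetCard (k + 1), F T + ∑ T ∈ s.powersetCard k, F (insert x T) := by
  have hinj : Set.InjOn (insert x) (s.powersetCard k : Set (Finset α)) := by
    intro A hA B hB hAB
    have hxA : x ∉ A := fun h => hx (mem_powersetCard.1 hA |>.1 h)
    have hxB : x ∉ B := fun h => hx (mem_powersetCard.1 hB |>.1 h)
    rw [← erase_insert hxA, ← erase_insert hxB, hAB]
  have hdisj : Disjoint (s.powersetCard (k + 1)) ((s.powersetCard k).image (insert x)) := by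
    refine disjoint_left.2 fun T hT hT' => ?_
    obtain ⟨A, -, rfl⟩ := mem_image.1 hT'
    exact hx (mem_powersetCard.1 hT |>.1 (mem_insert_self x A))
  rw [powersetCard_succ_insert hx, sum_union hdisj, sum_image hinj]

theorem card_filter_powersetCard_succ_superset {s T : Finset α} {k : ℕ}
    (hT : T ∈ s.powersetCard k) :
    #{U ∈ s.powersetCard (k + 1) | T ⊆ U} = #s - k := by
  obtain ⟨hTs, hTk⟩ := mem_powersetCard.1 hT
  have himage : {U ∈ s.powersetCard (k + 1) | T ⊆ U} = (s \ T).image (insert · T) := by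
    ext U
    simp only [mem_filter, mem_powersetCard, mem_image, mem_sdiff]
    constructor
    · rintro ⟨⟨hUs, hUk⟩, hTU⟩
      obtain ⟨x, hxU, hxT⟩ := exists_of_ssubset (ssubset_of_subset_of_ne hTU (by
        rintro rfl; omega))
      refine ⟨x, ⟨hUs hxU, hxT⟩, eq_of_subset_of_card_le (insert_subset hxU hTU) ?_⟩
      rw [card_insert_of_notMem hxT]; omega
    · rintro ⟨x, ⟨hxs, hxT⟩, rfl⟩
      exact ⟨⟨insert_subset hxs hTs, by rw [card_insert_of_notMem hxT, hTk]⟩, subset_insert x T⟩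
  rw [himage, card_image_of_injOn, card_sdiff_of_subset hTs, hTk]
  intro x hx y hy hxy
  exact (insert_inj (mem_sdiff.1 (mem_coe.1 hx)).2).1 hxy

theorem sum_powersetCard_succ_sum_powersetCard (s : Finset α) (k : ℕ) (F : Finset α → β) :
    ∑ U ∈ s.powersetCard (k + 1), ∑ T ∈ U.powersetCard k, F T =
      (#s - k) • ∑ T ∈ s.powersetCard k, F T := by
  rw [sum_comm' (t' := s.powersetCard k) (s' := fun T => {U ∈ s.powersetCard (k + 1) | T ⊆ U})]
  · rw [smul_sum]
    refine sum_congr rfl fun T hT => ?_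
    rw [sum_const, card_filter_powersetCard_succ_superset hT]
  · intro U T
    simp only [mem_powersetCard, mem_filter]
    exact ⟨fun ⟨hU, hTU, hTk⟩ => ⟨⟨hU, hTU⟩, hTU.trans hU.1, hTk⟩,
      fun ⟨⟨hU, hTU⟩, _, hTk⟩ => ⟨hU, hTU, hTk⟩⟩

end Finset

namespace Matrix

section CommRing

variable {R : Type*} [CommRing R] {n : Type*} [Fintype n] [DecidableEq n]
  {ι : Type*} [DecidableEq ι]

theorem det_sum_vecMulVec_eq_sum_injective (S : Finset ι) (f g : ι → n → R) :
    det (∑ i ∈ S, vecMulVec (f i) (g i)) =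
      ∑ r ∈ Fintype.piFinset (fun _ : n => S) with Function.Injective r,
        (∏ j, f (r j) j) * det (of fun j => g (r j)) := by
  have hrows : ∑ i ∈ S, vecMulVec (f i) (g i) = of fun j => ∑ i ∈ S, f i j • g i := by
    ext j k
    simp [vecMulVec_apply, sum_apply]
  have hexpand : det (of fun j => ∑ i ∈ S, f i j • g i) =
      ∑ r ∈ Fintype.piFinset (fun _ : n => S), (∏ j, f (r j) j) * det (of fun j => g (r j)) := by
    change detRowAlternating.toMultilinearMap (fun j => ∑ i ∈ S, f i j • g i) = _
    simp only [MultilinearMap.map_sum_finset, MultilinearMap.map_smul_univ, smul_eq_mul]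
    rfl
  rw [hrows, hexpand, sum_filter_of_ne]
  intro r _ hr
  by_contra hinj
  obtain ⟨a, b, hab, hne⟩ := Function.not_injective_iff.1 hinj
  exact hr (by rw [det_zero_of_row_eq hne (by ext k; simp [hab]), mul_zero])

theorem det_sum_vecMulVec_eq_sum_powersetCard (S : Finset ι) (f g : ι → n → R) :
    det (∑ i ∈ S, vecMulVec (f i) (g i)) =
      ∑ T ∈ S.powersetCard (Fintype.card n), det (∑ i ∈ T, vecMulVec (f i) (g i)) := by
  have hmaps : ∀ r ∈ {r ∈ Fintype.piFinset (fun _ : n => S) | Function.Injective r},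
      univ.image r ∈ S.powersetCard (Fintype.card n) := by
    intro r hr
    obtain ⟨hrS, hinj⟩ := mem_filter.1 hr
    rw [Fintype.mem_piFinset] at hrS
    exact mem_powersetCard.2 ⟨image_subset_iff.2 fun j _ => hrS j,
      by rw [card_image_of_injective _ hinj, card_univ]⟩
  rw [det_sum_vecMulVec_eq_sum_injective, ← sum_fiberwise_of_maps_to hmaps]
  refine sum_congr rfl fun T hT => ?_
  obtain ⟨hTS, hTcard⟩ := mem_powersetCard.1 hT
  rw [det_sum_vecMulVec_eq_sum_injective, filter_filter]
  refine sum_congr (Finset.ext fun r => ?_) fun _ _ => rfl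
  simp only [mem_filter, Fintype.mem_piFinset]
  constructor
  · rintro ⟨-, hinj, rfl⟩
    exact ⟨fun j => mem_image_of_mem r (mem_univ j), hinj⟩
  · rintro ⟨hrT, hinj⟩
    refine ⟨fun j => hTS (hrT j), hinj, eq_of_subset_of_card_le ?_ ?_⟩
    · exact image_subset_iff.2 fun j _ => hrT j
    · rw [card_image_of_injective _ hinj, card_univ, hTcard]

theorem det_add_vecMulVec {A : Matrix n n R} (hA : IsUnit A.det) (a b : n → R) :
    det (A + vecMulVec a b) = det A * (1 + b ⬝ᵥ A⁻¹ *ᵥ a) := by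
  have hfactor : A + vecMulVec a b = A * (1 + vecMulVec (A⁻¹ *ᵥ a) b) := by
    rw [Matrix.mul_add, Matrix.mul_one, mul_vecMulVec, mulVec_mulVec, mul_nonsing_inv A hA,
      one_mulVec]
  rw [hfactor, det_mul, vecMulVec_eq Unit, det_one_add_replicateCol_mul_replicateRow]

theorem det_sum_vecMulVec_add_vecMulVec_sub_det {m : ℕ} (hm : Fintype.card n = m + 1)
    (S : Finset ι) (f g : ι → n → R) (a b : n → R) :
    det (∑ i ∈ S, vecMulVec (f i) (g i) + vecMulVec a b) - det (∑ i ∈ S, vecMulVec (f i) (g i)) =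
      ∑ T ∈ S.powersetCard m, det (∑ i ∈ T, vecMulVec (f i) (g i) + vecMulVec a b) := by
  -- Cauchy–Binet for the family indexed by `Option ι`, with `a, b` placed at `none`.
  let F : Option ι → n → R := fun o => o.elim a f
  let G : Option ι → n → R := fun o => o.elim b g
  have hsome : ∀ T : Finset ι,
      ∑ i ∈ T.map .some, vecMulVec (F i) (G i) = ∑ i ∈ T, vecMulVec (f i) (g i) :=
    fun T => sum_map _ _ _
  have hnone : ∀ T : Finset ι, ∑ i ∈ insert none (T.map .some), vecMulVec (F i) (G i) =
      ∑ i ∈ T, vecMulVec (f i) (g i) + vecMulVec a b := by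
    intro T
    rw [sum_insert (by simp), hsome, add_comm]
    rfl
  have hcb := det_sum_vecMulVec_eq_sum_powersetCard (insert none (S.map .some)) F G
  rw [hnone, hm, sum_powersetCard_succ_insert (by simp), powersetCard_map, powersetCard_map,
    sum_map, sum_map] at hcb
  simp only [RelEmbedding.coe_toEmbedding, mapEmbedding_apply, hsome, hnone, ← hm,
    ← det_sum_vecMulVec_eq_sum_powersetCard] at hcb
  rw [hcb, add_sub_cancel_left]

theorem det_mul_dotProduct_inv_mulVec_eq_sum {m : ℕ} (hm : Fintype.card n = m + 1)
    (S : Finset ι) (f g : ι → n → R) (a b : n → R)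
    (hS : IsUnit (det (∑ i ∈ S, vecMulVec (f i) (g i)))) :
    det (∑ i ∈ S, vecMulVec (f i) (g i)) * (b ⬝ᵥ (∑ i ∈ S, vecMulVec (f i) (g i))⁻¹ *ᵥ a) =
      ∑ T ∈ S.powersetCard m, det (∑ i ∈ T, vecMulVec (f i) (g i) + vecMulVec a b) := by
  rw [← det_sum_vecMulVec_add_vecMulVec_sub_det hm, det_add_vecMulVec hS]
  ring

theorem sum_powersetCard_det_mul_dotProduct_inv_mulVec {m : ℕ} (hm : Fintype.card n = m + 1)
    (s : Finset ι) (f g : ι → n → R) (a b : n → R)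
    (hs : IsUnit (det (∑ i ∈ s, vecMulVec (f i) (g i))))
    (hT : ∀ T ∈ s.powersetCard (m + 1), IsUnit (det (∑ i ∈ T, vecMulVec (f i) (g i)))) :
    ∑ T ∈ s.powersetCard (m + 1), det (∑ i ∈ T, vecMulVec (f i) (g i)) *
        (b ⬝ᵥ (∑ i ∈ T, vecMulVec (f i) (g i))⁻¹ *ᵥ a) =
      (#s - m) • (det (∑ i ∈ s, vecMulVec (f i) (g i)) *
        (b ⬝ᵥ (∑ i ∈ s, vecMulVec (f i) (g i))⁻¹ *ᵥ a)) := by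
  rw [sum_congr rfl fun T hT' => det_mul_dotProduct_inv_mulVec_eq_sum hm T f g a b (hT T hT'),
    sum_powersetCard_succ_sum_powersetCard, det_mul_dotProduct_inv_mulVec_eq_sum hm s f g a b hs]

end CommRing

theorem posDef_sum_vecMulVec_star {𝕜 : Type*} [RCLike 𝕜] {n : Type*} [Fintype n] {ι : Type*}
    (v : ι → n → 𝕜) (S : Finset ι) (hS : Submodule.span 𝕜 (v '' S) = ⊤) :
    (∑ i ∈ S, vecMulVec (v i) (star (v i))).PosDef := by
  have hpsd := posSemidef_sum S fun i _ => posSemidef_vecMulVec_self_star (v i)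
  refine PosDef.of_dotProduct_mulVec_pos hpsd.isHermitian fun x hx => ?_
  have hterm : ∀ a : n → 𝕜,
      star x ⬝ᵥ vecMulVec a (star a) *ᵥ x = star (star a ⬝ᵥ x) * (star a ⬝ᵥ x) := by
    intro a
    rw [vecMulVec_mulVec, op_smul_eq_smul, dotProduct_smul, smul_eq_mul, star_dotProduct,
      star_star, mul_comm]
  obtain ⟨i, hi, hvx⟩ : ∃ i ∈ S, star (v i) ⬝ᵥ x ≠ 0 := by
    by_contra! horth
    have hspan : Submodule.span 𝕜 (v '' S) ≤ LinearMap.ker (dotProductBilin 𝕜 𝕜 (star x)) :=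
      Submodule.span_le.2 <| by
        rintro _ ⟨i, hi, rfl⟩
        rw [SetLike.mem_coe, LinearMap.mem_ker, dotProductBilin_apply_apply, star_dotProduct,
          horth i hi, star_zero]
    exact hx (dotProduct_star_self_eq_zero.1 (hspan (hS ▸ Submodule.mem_top)))
  rw [sum_mulVec, dotProduct_sum]
  refine sum_pos' (fun j _ => hterm (v j) ▸ star_mul_self_nonneg _) ⟨i, hi, ?_⟩
  rw [hterm]
  exact star_mul_self_pos (IsRegular.of_ne_zero hvx)

end Matrix

theorem Submodule.span_image_eq_top_of_card_le {K : Type*} [Field K] {n : Type*} [Fintype n]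
    {ι : Type*} {v : ι → n → K}
    (hv : ∀ T : Finset ι, #T = Fintype.card n → LinearIndependent K (fun i : T => v i))
    {S : Finset ι} (hS : Fintype.card n ≤ #S) :
    Submodule.span K (v '' S) = ⊤ := by
  obtain ⟨T, hTS, hT⟩ := exists_subset_card_eq hS
  have hspanT := (hv T hT).span_eq_top_of_card_eq_finrank'
    (by rw [Fintype.card_coe, hT, Module.finrank_fintype_fun_eq_card])
  rw [← top_le_iff, ← hspanT]
  exact Submodule.span_mono (by rintro _ ⟨i, rfl⟩; exact ⟨i, hTS i.2, rfl⟩)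

theorem Complex.exists_le_of_sum_mul_eq {ι : Type*} {s : Finset ι} (hs : s.Nonempty)
    {c x : ι → ℂ} {y : ℂ} (hc : ∀ i ∈ s, 0 < c i) (hx : ∀ i ∈ s, 0 ≤ x i) (hy : 0 ≤ y)
    (h : ∑ i ∈ s, c i * x i = (∑ i ∈ s, c i) * y) :
    ∃ i ∈ s, x i ≤ y := by
  have hre : ∀ i ∈ s, ∀ z : ℂ, (c i * z).re = (c i).re * z.re := fun i hi z => by
    simp [← (pos_iff.1 (hc i hi)).2]
  have hsum : ∑ i ∈ s, (c i).re * (x i).re = ∑ i ∈ s, (c i).re * y.re := by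
    have := congrArg re h
    rw [re_sum, sum_mul, re_sum] at this
    rwa [sum_congr rfl fun i hi => hre i hi (x i), sum_congr rfl fun i hi => hre i hi y] at this
  obtain ⟨i, hi, hle⟩ := exists_le_of_sum_le hs hsum.le
  refine ⟨i, hi, le_def.2 ⟨le_of_mul_le_mul_left hle (pos_iff.1 (hc i hi)).1, ?_⟩⟩
  rw [← (nonneg_iff.1 (hx i hi)).2, ← (nonneg_iff.1 hy).2]

theorem stmt0_general (t d : ℕ) (hdt : d ≤ t)
    (v : Fin t → (Fin d → ℂ)) (u : Fin d → ℂ)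
    (hgen : ∀ T : Finset (Fin t), T.card = d →
      LinearIndependent ℂ (fun i : T => v i)) :
    ∃ T : Finset (Fin t), T.card = d ∧
      star u ⬝ᵥ ((∑ i ∈ T, vecMulVec (v i) (star (v i)))⁻¹).mulVec u ≤
        ((t - d + 1 : ℕ) : ℂ) *
          (star u ⬝ᵥ ((∑ i : Fin t, vecMulVec (v i) (star (v i)))⁻¹).mulVec u) := by
  cases d with
  | zero => exact ⟨∅, rfl, by simp [dotProduct]⟩
  | succ e =>
  set M : Finset (Fin t) → Matrix (Fin (e + 1)) (Fin (e + 1)) ℂ :=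
    fun S => ∑ i ∈ S, vecMulVec (v i) (star (v i))
  set q : Finset (Fin t) → ℂ := fun S => star u ⬝ᵥ (M S)⁻¹ *ᵥ u
  have hM : ∀ S : Finset (Fin t), e + 1 ≤ #S → (M S).PosDef := fun S hS =>
    posDef_sum_vecMulVec_star v S
      (Submodule.span_image_eq_top_of_card_le (by simpa using hgen) (by simpa using hS))
  have huniv : e + 1 ≤ #(univ : Finset (Fin t)) := by simpa using hdt
  have hMT : ∀ T ∈ univ.powersetCard (e + 1), (M T).PosDef :=
    fun T hT => hM T (mem_powersetCard.1 hT).2.ge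
  have hcb : det (M univ) = ∑ T ∈ univ.powersetCard (e + 1), det (M T) := by
    simpa using det_sum_vecMulVec_eq_sum_powersetCard univ v (fun i => star (v i))
  have hsum : ∑ T ∈ univ.powersetCard (e + 1), det (M T) * q T =
      (∑ T ∈ univ.powersetCard (e + 1), det (M T)) * ((t - e : ℕ) * q univ) := by
    rw [sum_powersetCard_det_mul_dotProduct_inv_mulVec (Fintype.card_fin _) univ _ _ u (star u)
        (hM univ huniv).det_pos.ne'.isUnit
        fun T hT => (hMT T hT).det_pos.ne'.isUnit,
      ← hcb, card_univ, Fintype.card_fin, nsmul_eq_mul]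
    ring
  rw [show t - (e + 1) + 1 = t - e by omega]
  obtain ⟨T, hT, hle⟩ := Complex.exists_le_of_sum_mul_eq (powersetCard_nonempty.2 huniv)
    (fun T hT => (hMT T hT).det_pos)
    (fun T hT => (hMT T hT).inv.posSemidef.dotProduct_mulVec_nonneg u)
    (mul_nonneg (Nat.cast_nonneg _) ((hM univ huniv).inv.posSemidef.dotProduct_mulVec_nonneg u))
    hsum
  exact ⟨T, (mem_powersetCard.1 hT).2, hle⟩

theorem stmt0 (t d : ℕ) (hd : 0 < d) (hdt : d ≤ t)
    (v : Fin t → (Fin d → ℂ)) (u : Fin d → ℂ)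
    (hgen : ∀ T : Finset (Fin t), T.card = d →
      LinearIndependent ℂ (fun i : T => v i)) :
    ∃ T : Finset (Fin t), T.card = d ∧
      star u ⬝ᵥ ((∑ i ∈ T, vecMulVec (v i) (star (v i)))⁻¹).mulVec u ≤
        ((t - d + 1 : ℕ) : ℂ) *
          (star u ⬝ᵥ ((∑ i : Fin t, vecMulVec (v i) (star (v i)))⁻¹).mulVec u) :=
  stmt0_general t d hdt v u hgen
end

section
/- Let w ∈ ℂ with w ≠ 0 and s > 0. Then ∫_{-1/2}^{1/2}∫_{-1/2}^{1/2} log|w − s(ξ + iη)| dξ dη ≤ log|w| + s²/(12 ln 2 · |w|²), where log is base-2 logarithm. -/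
/-!
From `log x ≤ x - 1` at `x = r² / ‖w‖²`, `log r ≤ log ‖w‖ + (r² - ‖w‖²) / (2‖w‖²)`.
For `r = ‖w - s(ξ + iη)‖` the right-hand side is a quadratic polynomial in `(ξ, η)` whose linear terms average to zero
over the centred square, while `ξ²` and `η²` each average to `1/12`.

The singularity at `w = s(ξ + iη)` is harmless: on every vertical slice with
`Re w ≠ sξ` the integrand is continuous and bounded below by `log |Re w - sξ|`, an integrable
function of `ξ`, which makes the inner integral an integrable function of `ξ`.
-/

open MeasureTheory Set Real

theorem integral_quadratic_centered (C D E : ℝ) :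
    ∫ x in (-(1/2) : ℝ)..(1/2), (C + D * x + E * x ^ 2) = C + E / 12 := by
  have hint {g : ℝ → ℝ} (hg : Continuous g) : IntervalIntegrable g volume (-(1/2)) (1/2) :=
    hg.intervalIntegrable _ _
  rw [intervalIntegral.integral_add (hint (by fun_prop)) (hint (by fun_prop)),
    intervalIntegral.integral_add (hint (by fun_prop)) (hint (by fun_prop)),
    intervalIntegral.integral_const_mul, intervalIntegral.integral_const_mul,
    integral_id, integral_pow, intervalIntegral.integral_const]
  norm_num
  ring

theorem Real.logb_le_logb_add_sq_sub_sq_div {b r R : ℝ} (hb : 1 < b) (hr : 0 < r) (hR : 0 < R) :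
    logb b r ≤ logb b R + (r ^ 2 - R ^ 2) / (2 * log b * R ^ 2) := by
  have hlog_sq : log (r ^ 2 / R ^ 2) ≤ r ^ 2 / R ^ 2 - 1 :=
    log_le_sub_one_of_pos (by positivity)
  rw [log_div (by positivity) (by positivity), log_pow, log_pow] at hlog_sq
  have hlog : log r ≤ log R + (r ^ 2 - R ^ 2) / (2 * R ^ 2) := by
    rw [show (r ^ 2 - R ^ 2) / (2 * R ^ 2) = (r ^ 2 / R ^ 2 - 1) / 2 by field_simp]
    push_cast at hlog_sq
    linarith
  have hb' : 0 < log b := log_pos hb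
  calc logb b r ≤ (log R + (r ^ 2 - R ^ 2) / (2 * R ^ 2)) / log b := by
        rw [logb]; gcongr
    _ = _ := by rw [logb]; field_simp

theorem intervalIntegral_iterated_le_of_ae_bounds {f : ℝ → ℝ → ℝ} {lo hi : ℝ → ℝ} {a b c d : ℝ}
    (hab : a ≤ b) (hf : StronglyMeasurable (Function.uncurry f))
    (hlo : IntervalIntegrable lo volume a b) (hhi : IntervalIntegrable hi volume a b)
    (hbounds : ∀ᵐ ξ, lo ξ ≤ ∫ η in c..d, f ξ η ∧ ∫ η in c..d, f ξ η ≤ hi ξ) :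
    ∫ ξ in a..b, ∫ η in c..d, f ξ η ≤ ∫ ξ in a..b, hi ξ := by
  have hmeas : StronglyMeasurable fun ξ => ∫ η in c..d, f ξ η :=
    hf.integral_prod_right.sub hf.integral_prod_right
  have hint : IntervalIntegrable (fun ξ => ∫ η in c..d, f ξ η) volume a b := by
    refine (hlo.abs.add hhi.abs).mono_fun' hmeas.aestronglyMeasurable (ae_restrict_of_ae ?_)
    filter_upwards [hbounds] with ξ ⟨hl, hh⟩
    exact (abs_le_max_abs_abs hl hh).trans (max_le_add_of_nonneg (abs_nonneg _) (abs_nonneg _))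
  exact intervalIntegral.integral_mono_ae hab hint hhi (hbounds.mono fun _ h => h.2)

theorem sq_norm_sub_mul_add_mul_I (w : ℂ) (s ξ η : ℝ) :
    ‖w - s * (ξ + η * Complex.I)‖ ^ 2 = (w.re - s * ξ) ^ 2 + (w.im - s * η) ^ 2 := by
  have hre : (w - s * (ξ + η * Complex.I)).re = w.re - s * ξ := by simp
  have him : (w - s * (ξ + η * Complex.I)).im = w.im - s * η := by simp
  rw [Complex.sq_norm, Complex.normSq_apply, hre, him]
  ring

theorem intervalIntegrable_logb_abs_sub_mul (b a s c d : ℝ) :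
    IntervalIntegrable (fun ξ : ℝ => logb b |a - s * ξ|) volume c d := by
  have hmero : MeromorphicOn (fun ξ : ℝ => a - s * ξ) (uIcc c d) :=
    (analyticOnNhd_const.sub (analyticOnNhd_const.mul analyticOnNhd_id)).meromorphicOn
  simpa [logb] using hmero.intervalIntegrable_log_norm.div_const (log b)

theorem ae_ne_mul (a : ℝ) {s : ℝ} (hs : s ≠ 0) : ∀ᵐ ξ : ℝ, a ≠ s * ξ := by
  filter_upwards [Measure.ae_ne volume (a / s)] with ξ hξ
  rwa [ne_eq, eq_div_iff hs, mul_comm, eq_comm] at hξ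

section SquareAverage

variable {w : ℂ} {s ξ : ℝ}

theorem abs_re_sub_le_norm_sub (η : ℝ) :
    |w.re - s * ξ| ≤ ‖w - s * (ξ + η * Complex.I)‖ := by
  simpa using Complex.abs_re_le_norm (w - s * (ξ + η * Complex.I))

theorem continuous_logb_norm_sub (hξ : w.re ≠ s * ξ) :
    Continuous fun η : ℝ => logb 2 ‖w - s * (ξ + η * Complex.I)‖ :=
  Continuous.logb (by fun_prop) fun η =>
    ((abs_pos.2 (sub_ne_zero.2 hξ)).trans_le (abs_re_sub_le_norm_sub η)).ne'

theorem logb_abs_re_sub_le_integral (hξ : w.re ≠ s * ξ) :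
    logb 2 |w.re - s * ξ| ≤ ∫ η in (-(1/2) : ℝ)..(1/2), logb 2 ‖w - s * (ξ + η * Complex.I)‖ := by
  calc logb 2 |w.re - s * ξ| = ∫ _ in (-(1/2) : ℝ)..(1/2), logb 2 |w.re - s * ξ| := by
        rw [intervalIntegral.integral_const]; norm_num
    _ ≤ _ := intervalIntegral.integral_mono_on (by norm_num) intervalIntegrable_const
        ((continuous_logb_norm_sub hξ).intervalIntegrable _ _) fun η _ =>
          logb_le_logb_of_le one_lt_two (abs_pos.2 (sub_ne_zero.2 hξ)) (abs_re_sub_le_norm_sub η)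

variable (w s ξ) in
/-- The average over `η` of the quadratic majorant of `logb 2 ‖w - s(ξ + iη)‖`. -/
noncomputable def sliceBound : ℝ :=
  logb 2 ‖w‖ + ((w.re - s * ξ) ^ 2 + w.im ^ 2 - ‖w‖ ^ 2 + s ^ 2 / 12) / (2 * log 2 * ‖w‖ ^ 2)

theorem integral_logb_norm_sub_le_sliceBound (hw : w ≠ 0) (hξ : w.re ≠ s * ξ) :
    ∫ η in (-(1/2) : ℝ)..(1/2), logb 2 ‖w - s * (ξ + η * Complex.I)‖ ≤ sliceBound w s ξ := by
  set c := 2 * log 2 * ‖w‖ ^ 2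
  have hbound (η : ℝ) : logb 2 ‖w - s * (ξ + η * Complex.I)‖ ≤
      (logb 2 ‖w‖ + ((w.re - s * ξ) ^ 2 + w.im ^ 2 - ‖w‖ ^ 2) / c) + (-2 * w.im * s / c) * η +
        (s ^ 2 / c) * η ^ 2 := by
    have hz := (abs_pos.2 (sub_ne_zero.2 hξ)).trans_le (abs_re_sub_le_norm_sub (w := w) η)
    refine (logb_le_logb_add_sq_sub_sq_div one_lt_two hz (norm_pos_iff.2 hw)).trans_eq ?_
    rw [sq_norm_sub_mul_add_mul_I]
    ring
  calc _ ≤ ∫ η in (-(1/2) : ℝ)..(1/2),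
        ((logb 2 ‖w‖ + ((w.re - s * ξ) ^ 2 + w.im ^ 2 - ‖w‖ ^ 2) / c) + (-2 * w.im * s / c) * η +
          (s ^ 2 / c) * η ^ 2) :=
        intervalIntegral.integral_mono_on (by norm_num)
          ((continuous_logb_norm_sub hξ).intervalIntegrable _ _)
          (Continuous.intervalIntegrable (by fun_prop) _ _) fun η _ => hbound η
    _ = sliceBound w s ξ := by rw [integral_quadratic_centered, sliceBound]; ring

theorem intervalIntegrable_sliceBound (a b : ℝ) :
    IntervalIntegrable (sliceBound w s) volume a b :=
  Continuous.intervalIntegrable (by unfold sliceBound; fun_prop) a b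

theorem integral_sliceBound (hw : w ≠ 0) :
    ∫ ξ in (-(1/2) : ℝ)..(1/2), sliceBound w s ξ =
      logb 2 ‖w‖ + s ^ 2 / (12 * log 2 * ‖w‖ ^ 2) := by
  set c := 2 * log 2 * ‖w‖ ^ 2
  have hw2 : ‖w‖ ^ 2 = w.re ^ 2 + w.im ^ 2 := by
    rw [Complex.sq_norm, Complex.normSq_apply]; ring
  have hquad : sliceBound w s =
      fun ξ => (logb 2 ‖w‖ + (s ^ 2 / 12) / c) + (-2 * w.re * s / c) * ξ + (s ^ 2 / c) * ξ ^ 2 := by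
    funext ξ
    simp only [sliceBound, c]
    linear_combination (-1 / (2 * log 2 * ‖w‖ ^ 2)) * hw2
  have hc : c ≠ 0 := by positivity
  rw [hquad, integral_quadratic_centered]
  field_simp
  ring

end SquareAverage

theorem stmt6 (w : ℂ) (hw : w ≠ 0) (s : ℝ) (hs : 0 < s) :
    (∫ ξ in (-(1/2) : ℝ)..(1/2), ∫ η in (-(1/2) : ℝ)..(1/2),
        Real.logb 2 ‖w - (s : ℂ) * ((ξ : ℂ) + (η : ℂ) * Complex.I)‖) ≤
      Real.logb 2 ‖w‖ + s^2 / (12 * Real.log 2 * ‖w‖ ^ 2) := by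
  have hmeas : StronglyMeasurable (Function.uncurry fun ξ η : ℝ =>
      logb 2 ‖w - s * (ξ + η * Complex.I)‖) :=
    ((measurable_log.comp (by fun_prop)).div_const _).stronglyMeasurable
  calc _ ≤ ∫ ξ in (-(1/2) : ℝ)..(1/2), sliceBound w s ξ :=
      intervalIntegral_iterated_le_of_ae_bounds (by norm_num) hmeas
        (intervalIntegrable_logb_abs_sub_mul 2 w.re s _ _) (intervalIntegrable_sliceBound _ _)
        ((ae_ne_mul w.re hs.ne').mono fun _ hξ =>
          ⟨logb_abs_re_sub_le_integral hξ, integral_logb_norm_sub_le_sliceBound hw hξ⟩)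
    _ = _ := integral_sliceBound hw
end
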